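/- arXiv:1511.05823 — 6 statements merged into one kernel-verified Lean document; each statement's English description precedes it below -/
import Mathlib

section
/- Let k ≥ 3 and let I₁, …, I_k be open intervals of ℝ whose common intersection I₁ ∩ ⋯ ∩ I_k is nonempty. Then there exist pairwise distinct indices i, j, l ∈ {1, …, k} such that I_l ⊆ I_i ∪ I_j. -/
/-- If `k ≥ 3` open intervals of `ℝ` (open convex subsets, possibly
unbounded) have a nonempty common intersection, then one of them is contained in the
union of two of the others (with all three indices pairwise distinct). -/
theorem exists_interval_subset_union_of_common_point
    (k : ℕ) (hk : 3 ≤ k) (I : Fin k → Set ℝ)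
    (hopen : ∀ i, IsOpen (I i)) (hconv : ∀ i, Convex ℝ (I i))
    (hne : (⋂ i, I i).Nonempty) :
    ∃ i j l : Fin k, i ≠ j ∧ i ≠ l ∧ j ≠ l ∧ I l ⊆ I i ∪ I j := by
  obtain ⟨p, hp⟩ := hne
  simp only [Set.mem_iInter] at hp
  haveI : Nonempty (Fin k) := ⟨⟨0, by omega⟩⟩
  set a : Fin k → EReal := fun i => sInf ((↑) '' I i) with ha
  set b : Fin k → EReal := fun i => sSup ((↑) '' I i) with hb
  obtain ⟨i₀, hi₀⟩ := Finite.exists_min a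
  obtain ⟨j₀, hj₀⟩ := Finite.exists_max b
  -- any point of any interval that is ≤ p lies in I i₀
  have hleft : ∀ l, ∀ x ∈ I l, x ≤ p → x ∈ I i₀ := by
    intro l x hx hxp
    obtain ⟨ε, hε, hball⟩ := Metric.isOpen_iff.1 (hopen l) x hx
    have hy : x - ε / 2 ∈ I l := by
      apply hball
      simp only [Metric.mem_ball, Real.dist_eq]
      rw [abs_of_nonpos (by linarith)]
      linarith
    have hal : a l < (x : EReal) := by
      calc a l ≤ ((x - ε / 2 : ℝ) : EReal) := sInf_le ⟨_, hy, rfl⟩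
        _ < (x : EReal) := by exact_mod_cast by linarith
    have : a i₀ < (x : EReal) := lt_of_le_of_lt (hi₀ l) hal
    obtain ⟨z, ⟨w, hw, rfl⟩, hzx⟩ := sInf_lt_iff.1 this
    have hwx : w < x := by exact_mod_cast hzx
    exact (hconv i₀).ordConnected.out hw (hp i₀) ⟨le_of_lt hwx, hxp⟩
  have hright : ∀ l, ∀ x ∈ I l, p ≤ x → x ∈ I j₀ := by
    intro l x hx hxp
    obtain ⟨ε, hε, hball⟩ := Metric.isOpen_iff.1 (hopen l) x hx
    have hy : x + ε / 2 ∈ I l := by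
      apply hball
      simp only [Metric.mem_ball, Real.dist_eq]
      rw [abs_of_nonneg (by linarith)]
      linarith
    have hbl : (x : EReal) < b l := by
      calc (x : EReal) < ((x + ε / 2 : ℝ) : EReal) := by exact_mod_cast by linarith
        _ ≤ b l := le_sSup ⟨_, hy, rfl⟩
    have : (x : EReal) < b j₀ := lt_of_lt_of_le hbl (hj₀ l)
    obtain ⟨z, ⟨w, hw, rfl⟩, hzx⟩ := lt_sSup_iff.1 this
    have hwx : x < w := by exact_mod_cast hzx
    exact (hconv j₀).ordConnected.out (hp j₀) hw ⟨hxp, le_of_lt hwx⟩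
  have hmain : ∀ l, I l ⊆ I i₀ ∪ I j₀ := by
    intro l x hx
    rcases le_total x p with h | h
    · exact Or.inl (hleft l x hx h)
    · exact Or.inr (hright l x hx h)
  -- pick a third index distinct from i₀, j₀
  have hcard : ({i₀, j₀} : Finset (Fin k)).card < Fintype.card (Fin k) := by
    have : ({i₀, j₀} : Finset (Fin k)).card ≤ 2 := Finset.card_insert_le _ _ |>.trans (by simp)
    simp only [Fintype.card_fin]
    omega
  have hssub : ({i₀, j₀} : Finset (Fin k)) ⊂ Finset.univ :=
    Finset.ssubset_univ_iff.2 (fun h => by simp [h, Finset.card_univ] at hcard)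
  obtain ⟨l, -, hl⟩ := Finset.exists_of_ssubset hssub
  simp only [Finset.mem_insert, Finset.mem_singleton, not_or] at hl
  by_cases hij : i₀ = j₀
  · -- all intervals inside I i₀; choose any second distinct index
    subst hij
    -- need a third index distinct from i₀ and l
    have hcard2 : ({i₀, l} : Finset (Fin k)).card < (Finset.univ : Finset (Fin k)).card := by
      have : ({i₀, l} : Finset (Fin k)).card ≤ 2 := Finset.card_insert_le _ _ |>.trans (by simp)
      simp only [Finset.card_univ, Fintype.card_fin]
      omega
    have hssub2 : ({i₀, l} : Finset (Fin k)) ⊂ Finset.univ :=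
      Finset.ssubset_univ_iff.2 (fun h => by
        simp [h, Finset.card_univ] at hcard2)
    obtain ⟨m, -, hm⟩ := Finset.exists_of_ssubset hssub2
    simp only [Finset.mem_insert, Finset.mem_singleton, not_or] at hm
    exact ⟨i₀, l, m, Ne.symm hl.1, Ne.symm hm.1, Ne.symm hm.2, fun x hx =>
      Or.inl ((hmain m hx).elim id id)⟩
  · exact ⟨i₀, j₀, l, hij, Ne.symm hl.1, Ne.symm hl.2, hmain l⟩
end

section
/- Let Z ⊆ ℝ be equipped with the subspace topology and let 𝒰 be a minimal cover of Z by open intervals of Z, i.e.: every element of 𝒰 is of the form I ∩ Z for some open interval I of ℝ, the union of the elements of 𝒰 equals Z, and no element of 𝒰 is contained in the union of the other elements of 𝒰. Then no three elements of 𝒰 intersect at a time: for any pairwise distinct U₁, U₂, U₃ ∈ 𝒰, the intersection U₁ ∩ U₂ ∩ U₃ is empty. -/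
/-- Points of `I` to the right of `x` lie in `J`, when `J` reaches at least as far
right as `I` does. -/
private lemma seg_sub_right {I J : Set ℝ} (hI : IsOpen I) (hJc : Convex ℝ J)
    {x : ℝ} (hxJ : x ∈ J)
    (hup : ∀ a ∈ I, ∃ b ∈ J, a ≤ b) :
    ∀ a ∈ I, x ≤ a → a ∈ J := by
  intro a haI hxa
  obtain ⟨ε, hε, hball⟩ := Metric.isOpen_iff.1 hI a haI
  have ha' : a + ε/2 ∈ I := by
    apply hball; simp only [Metric.mem_ball, Real.dist_eq]
    rw [abs_of_nonneg (by linarith)]; linarith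
  obtain ⟨b, hbJ, hab⟩ := hup _ ha'
  have hseg : a ∈ segment ℝ x b := by
    rw [segment_eq_Icc (by linarith)]
    exact ⟨hxa, by linarith⟩
  exact hJc.segment_subset hxJ hbJ hseg

private lemma seg_sub_left {I J : Set ℝ} (hI : IsOpen I) (hJc : Convex ℝ J)
    {x : ℝ} (hxJ : x ∈ J)
    (hdn : ∀ a ∈ I, ∃ b ∈ J, b ≤ a) :
    ∀ a ∈ I, a ≤ x → a ∈ J := by
  intro a haI hax
  obtain ⟨ε, hε, hball⟩ := Metric.isOpen_iff.1 hI a haI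
  have ha' : a - ε/2 ∈ I := by
    apply hball; simp only [Metric.mem_ball, Real.dist_eq]
    rw [abs_of_nonpos (by linarith)]; linarith
  obtain ⟨b, hbJ, hab⟩ := hdn _ ha'
  have hseg : a ∈ segment ℝ b x := by
    rw [segment_eq_Icc (by linarith)]
    exact ⟨by linarith, hax⟩
  exact hJc.segment_subset hbJ hxJ hseg

private lemma triple_cover {I₁ I₂ I₃ : Set ℝ}
    (o₁ : IsOpen I₁) (o₂ : IsOpen I₂) (o₃ : IsOpen I₃)
    (c₁ : Convex ℝ I₁) (c₂ : Convex ℝ I₂) (c₃ : Convex ℝ I₃)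
    {x : ℝ} (x₁ : x ∈ I₁) (x₂ : x ∈ I₂) (x₃ : x ∈ I₃) :
    I₁ ⊆ I₂ ∪ I₃ ∨ I₂ ⊆ I₁ ∪ I₃ ∨ I₃ ⊆ I₁ ∪ I₂ := by
  classical
  -- totality of the "reaches at least as far right" relation
  have totu : ∀ I J : Set ℝ, (∀ a ∈ I, ∃ b ∈ J, a ≤ b) ∨ (∀ a ∈ J, ∃ b ∈ I, a ≤ b) := by
    intro I J
    by_cases h : ∀ a ∈ I, ∃ b ∈ J, a ≤ b
    · exact Or.inl h
    · right
      push_neg at h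
      obtain ⟨a, haI, ha⟩ := h
      exact fun c _ => ⟨a, haI, le_of_lt (ha c ‹c ∈ J›)⟩
  have totd : ∀ I J : Set ℝ, (∀ a ∈ I, ∃ b ∈ J, b ≤ a) ∨ (∀ a ∈ J, ∃ b ∈ I, b ≤ a) := by
    intro I J
    by_cases h : ∀ a ∈ I, ∃ b ∈ J, b ≤ a
    · exact Or.inl h
    · right
      push_neg at h
      obtain ⟨a, haI, ha⟩ := h
      exact fun c hc => ⟨a, haI, le_of_lt (ha c hc)⟩
  have refl_u : ∀ I : Set ℝ, ∀ a ∈ I, ∃ b ∈ I, a ≤ b := fun I a ha => ⟨a, ha, le_rfl⟩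
  have refl_d : ∀ I : Set ℝ, ∀ a ∈ I, ∃ b ∈ I, b ≤ a := fun I a ha => ⟨a, ha, le_rfl⟩
  have trans_u : ∀ {I J K : Set ℝ}, (∀ a ∈ I, ∃ b ∈ J, a ≤ b) → (∀ a ∈ J, ∃ b ∈ K, a ≤ b) →
      (∀ a ∈ I, ∃ b ∈ K, a ≤ b) := by
    intro I J K h1 h2 a ha
    obtain ⟨b, hb, hab⟩ := h1 a ha
    obtain ⟨c, hc, hbc⟩ := h2 b hb
    exact ⟨c, hc, hab.trans hbc⟩
  have trans_d : ∀ {I J K : Set ℝ}, (∀ a ∈ I, ∃ b ∈ J, b ≤ a) → (∀ a ∈ J, ∃ b ∈ K, b ≤ a) →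
      (∀ a ∈ I, ∃ b ∈ K, b ≤ a) := by
    intro I J K h1 h2 a ha
    obtain ⟨b, hb, hab⟩ := h1 a ha
    obtain ⟨c, hc, hbc⟩ := h2 b hb
    exact ⟨c, hc, hbc.trans hab⟩
  -- pick a maximal-to-the-right set J and a maximal-to-the-left set K
  obtain ⟨J, cJ, xJ, u₁, u₂, u₃, hJ⟩ :
      ∃ J, Convex ℝ J ∧ x ∈ J ∧ (∀ a ∈ I₁, ∃ b ∈ J, a ≤ b) ∧ (∀ a ∈ I₂, ∃ b ∈ J, a ≤ b) ∧
        (∀ a ∈ I₃, ∃ b ∈ J, a ≤ b) ∧ (J = I₁ ∨ J = I₂ ∨ J = I₃) := by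
    rcases totu I₁ I₂ with h12 | h21
    · rcases totu I₂ I₃ with h23 | h32
      · exact ⟨I₃, c₃, x₃, trans_u h12 h23, h23, refl_u I₃, Or.inr (Or.inr rfl)⟩
      · exact ⟨I₂, c₂, x₂, h12, refl_u I₂, h32, Or.inr (Or.inl rfl)⟩
    · rcases totu I₁ I₃ with h13 | h31
      · exact ⟨I₃, c₃, x₃, h13, trans_u h21 h13, refl_u I₃, Or.inr (Or.inr rfl)⟩
      · exact ⟨I₁, c₁, x₁, refl_u I₁, h21, h31, Or.inl rfl⟩
  obtain ⟨K, cK, xK, d₁, d₂, d₃, hK⟩ :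
      ∃ K, Convex ℝ K ∧ x ∈ K ∧ (∀ a ∈ I₁, ∃ b ∈ K, b ≤ a) ∧ (∀ a ∈ I₂, ∃ b ∈ K, b ≤ a) ∧
        (∀ a ∈ I₃, ∃ b ∈ K, b ≤ a) ∧ (K = I₁ ∨ K = I₂ ∨ K = I₃) := by
    rcases totd I₁ I₂ with h12 | h21
    · rcases totd I₂ I₃ with h23 | h32
      · exact ⟨I₃, c₃, x₃, trans_d h12 h23, h23, refl_d I₃, Or.inr (Or.inr rfl)⟩
      · exact ⟨I₂, c₂, x₂, h12, refl_d I₂, h32, Or.inr (Or.inl rfl)⟩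
    · rcases totd I₁ I₃ with h13 | h31
      · exact ⟨I₃, c₃, x₃, h13, trans_d h21 h13, refl_d I₃, Or.inr (Or.inr rfl)⟩
      · exact ⟨I₁, c₁, x₁, refl_d I₁, h21, h31, Or.inl rfl⟩
  have pick : ∀ {I : Set ℝ}, IsOpen I → (∀ a ∈ I, ∃ b ∈ J, a ≤ b) →
      (∀ a ∈ I, ∃ b ∈ K, b ≤ a) → I ⊆ J ∪ K := by
    intro I oI hu hd a ha
    rcases le_total x a with h | h
    · exact Or.inl (seg_sub_right oI cJ xJ hu a ha h)
    · exact Or.inr (seg_sub_left oI cK xK hd a ha h)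
  rcases hJ with rfl | rfl | rfl <;> rcases hK with rfl | rfl | rfl
  · exact Or.inr (Or.inl fun a ha => Or.inl ((pick o₂ u₂ d₂ ha).elim id id))
  · exact Or.inr (Or.inr fun a ha => (pick o₃ u₃ d₃ ha).elim Or.inl Or.inr)
  · exact Or.inr (Or.inl fun a ha => (pick o₂ u₂ d₂ ha).elim Or.inl Or.inr)
  · exact Or.inr (Or.inr fun a ha => (pick o₃ u₃ d₃ ha).elim Or.inr Or.inl)
  · exact Or.inl fun a ha => Or.inl ((pick o₁ u₁ d₁ ha).elim id id)
  · exact Or.inl fun a ha => (pick o₁ u₁ d₁ ha).elim Or.inl Or.inr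
  · exact Or.inr (Or.inl fun a ha => (pick o₂ u₂ d₂ ha).elim Or.inr Or.inl)
  · exact Or.inl fun a ha => (pick o₁ u₁ d₁ ha).elim Or.inr Or.inl
  · exact Or.inl fun a ha => Or.inr ((pick o₁ u₁ d₁ ha).elim id id)

/-- In a minimal cover of `Z ⊆ ℝ` by open intervals of `Z`
(sets of the form `I ∩ Z` with `I` an open convex subset of `ℝ`), no three
pairwise distinct elements intersect. -/
theorem minimal_interval_cover_no_triple_intersection
    (Z : Set ℝ) (𝒰 : Set (Set ℝ))
    (hint : ∀ U ∈ 𝒰, ∃ I : Set ℝ, IsOpen I ∧ Convex ℝ I ∧ U = I ∩ Z)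
    (hcover : ⋃₀ 𝒰 = Z)
    (hmin : ∀ U ∈ 𝒰, ¬ U ⊆ ⋃₀ (𝒰 \ {U}))
    {U₁ U₂ U₃ : Set ℝ} (h₁ : U₁ ∈ 𝒰) (h₂ : U₂ ∈ 𝒰) (h₃ : U₃ ∈ 𝒰)
    (h12 : U₁ ≠ U₂) (h13 : U₁ ≠ U₃) (h23 : U₂ ≠ U₃) :
    U₁ ∩ U₂ ∩ U₃ = ∅ := by
  rw [Set.eq_empty_iff_forall_notMem]
  rintro x ⟨⟨hx₁, hx₂⟩, hx₃⟩
  obtain ⟨I₁, o₁, c₁, rfl⟩ := hint U₁ h₁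
  obtain ⟨I₂, o₂, c₂, rfl⟩ := hint U₂ h₂
  obtain ⟨I₃, o₃, c₃, rfl⟩ := hint U₃ h₃
  have hxZ : x ∈ Z := hx₁.2
  rcases triple_cover o₁ o₂ o₃ c₁ c₂ c₃ hx₁.1 hx₂.1 hx₃.1 with h | h | h
  · refine hmin _ h₁ fun a ha => ?_
    rcases h ha.1 with h' | h'
    · exact ⟨_, ⟨h₂, h12.symm⟩, h', ha.2⟩
    · exact ⟨_, ⟨h₃, h13.symm⟩, h', ha.2⟩
  · refine hmin _ h₂ fun a ha => ?_
    rcases h ha.1 with h' | h'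
    · exact ⟨_, ⟨h₁, h12⟩, h', ha.2⟩
    · exact ⟨_, ⟨h₃, h23.symm⟩, h', ha.2⟩
  · refine hmin _ h₃ fun a ha => ?_
    rcases h ha.1 with h' | h'
    · exact ⟨_, ⟨h₁, h13⟩, h', ha.2⟩
    · exact ⟨_, ⟨h₂, h23⟩, h', ha.2⟩
end

section
/- Let X be a topological space, f : X → ℝ a continuous function, and 𝒰 a family of subsets of ℝ such that any three pairwise distinct elements of 𝒰 have empty common intersection. Let 𝒱 be the connected pullback cover associated with f and 𝒰, i.e., the family of all connected components of the preimages f⁻¹(U) for U ∈ 𝒰. Then any three pairwise distinct elements of 𝒱 have empty common intersection. (Consequently, the nerve of 𝒱 — the Mapper — is at most 1-dimensional, i.e., a graph, whenever the cover 𝒰 is a generic open minimal interval cover.) -/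
/-- If any three pairwise distinct elements of a family `𝒰` of subsets
of `ℝ` have empty common intersection, then the same holds for the connected pullback
cover `𝒱` of a continuous function `f : X → ℝ`, i.e. the family of connected components
of the preimages `f ⁻¹' U`, `U ∈ 𝒰`. -/
theorem connected_pullback_cover_no_triple_intersection
    {X : Type*} [TopologicalSpace X] (f : X → ℝ) (hf : Continuous f)
    (𝒰 : Set (Set ℝ))
    (h𝒰 : ∀ U₁ ∈ 𝒰, ∀ U₂ ∈ 𝒰, ∀ U₃ ∈ 𝒰,
      U₁ ≠ U₂ → U₁ ≠ U₃ → U₂ ≠ U₃ → U₁ ∩ U₂ ∩ U₃ = ∅)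
    (𝒱 : Set (Set X))
    (h𝒱 : 𝒱 = {V | ∃ U ∈ 𝒰, ∃ x ∈ f ⁻¹' U, V = connectedComponentIn (f ⁻¹' U) x}) :
    ∀ V₁ ∈ 𝒱, ∀ V₂ ∈ 𝒱, ∀ V₃ ∈ 𝒱,
      V₁ ≠ V₂ → V₁ ≠ V₃ → V₂ ≠ V₃ → V₁ ∩ V₂ ∩ V₃ = ∅ := by
  subst h𝒱
  rintro V₁ ⟨U₁, hU₁, x₁, hx₁, rfl⟩ V₂ ⟨U₂, hU₂, x₂, hx₂, rfl⟩ V₃ ⟨U₃, hU₃, x₃, hx₃, rfl⟩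
    h12 h13 h23
  by_contra h
  obtain ⟨y, ⟨hy1, hy2⟩, hy3⟩ := Set.nonempty_iff_ne_empty.2 h
  have e1 : connectedComponentIn (f ⁻¹' U₁) x₁ = connectedComponentIn (f ⁻¹' U₁) y :=
    connectedComponentIn_eq hy1
  have e2 : connectedComponentIn (f ⁻¹' U₂) x₂ = connectedComponentIn (f ⁻¹' U₂) y :=
    connectedComponentIn_eq hy2
  have e3 : connectedComponentIn (f ⁻¹' U₃) x₃ = connectedComponentIn (f ⁻¹' U₃) y :=
    connectedComponentIn_eq hy3
  have hU12 : U₁ ≠ U₂ := by rintro rfl; exact h12 (e1.trans e2.symm)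
  have hU13 : U₁ ≠ U₃ := by rintro rfl; exact h13 (e1.trans e3.symm)
  have hU23 : U₂ ≠ U₃ := by rintro rfl; exact h23 (e2.trans e3.symm)
  have m1 : y ∈ f ⁻¹' U₁ := connectedComponentIn_subset _ _ hy1
  have m2 : y ∈ f ⁻¹' U₂ := connectedComponentIn_subset _ _ hy2
  have m3 : y ∈ f ⁻¹' U₃ := connectedComponentIn_subset _ _ hy3
  have hfy : f y ∈ U₁ ∩ U₂ ∩ U₃ := ⟨⟨m1, m2⟩, m3⟩
  rw [h𝒰 U₁ hU₁ U₂ hU₂ U₃ hU₃ hU12 hU13 hU23] at hfy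
  exact hfy
end

section
/- Let X be a topological space and f : X → ℝ a continuous function. Define the Reeb equivalence relation ∼ on X by: x ∼ y if and only if f(x) = f(y) and y belongs to the connected component of x in the level set f⁻¹({f(x)}) (this is an equivalence relation). Let R = X/∼ be the quotient space (the Reeb graph of f), π : X → R the quotient projection, and f̃ : R → ℝ the unique continuous map with f̃ ∘ π = f. Assume there exists a continuous map σ : R → X with π ∘ σ = id_R. Then for every α ∈ ℝ, the map induced by π from the set of connected components of the subspace f⁻¹((−∞, α]) to the set of connected components of the subspace f̃⁻¹((−∞, α]) is a bijection; likewise, the map induced by π from the set of connected components of f⁻¹([α, +∞)) to the set of connected components of f̃⁻¹([α, +∞)) is a bijection. -/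
/-- The Reeb equivalence relation of `f : X → ℝ`: `x ∼ y` iff `f x = f y` and `y`
belongs to the connected component of `x` in the level set `f ⁻¹' {f x}`. -/
def reebRel {X : Type*} [TopologicalSpace X] (f : X → ℝ) (x y : X) : Prop :=
  f x = f y ∧ y ∈ connectedComponentIn (f ⁻¹' {f x}) x

/-- The Reeb graph of `f : X → ℝ`: the quotient of `X` by the Reeb equivalence
relation, with the quotient topology. -/
def ReebGraph {X : Type*} [TopologicalSpace X] (f : X → ℝ) : Type _ :=
  Quot (reebRel f)

instance {X : Type*} [TopologicalSpace X] (f : X → ℝ) : TopologicalSpace (ReebGraph f) :=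
  instTopologicalSpaceQuot

/-- The quotient projection `π : X → R_f(X)`. -/
def reebProj {X : Type*} [TopologicalSpace X] (f : X → ℝ) : X → ReebGraph f :=
  Quot.mk (reebRel f)

/-- The induced quotient map `f̃ : R_f(X) → ℝ`, the unique map with `f̃ ∘ π = f`. -/
def reebMap {X : Type*} [TopologicalSpace X] (f : X → ℝ) : ReebGraph f → ℝ :=
  Quot.lift f (fun _ _ h => h.1)


/-- A general lemma: continuous maps in both directions inducing inverse maps on
connected components give a bijection. -/
theorem aux_bij {A B : Type*} [TopologicalSpace A] [TopologicalSpace B]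
    (p : A → B) (hp : Continuous p) (s : B → A) (hs : Continuous s)
    (hps : ∀ b, ConnectedComponents.mk (p (s b)) = ConnectedComponents.mk b)
    (hsp : ∀ a, ConnectedComponents.mk (s (p a)) = ConnectedComponents.mk a) :
    ∃ h : ConnectedComponents A → ConnectedComponents B,
      (∀ a : A, h (ConnectedComponents.mk a) = ConnectedComponents.mk (p a)) ∧
      Function.Bijective h := by
  have hcp : Continuous (ConnectedComponents.mk ∘ p) :=
    ConnectedComponents.continuous_coe.comp hp
  have hcs : Continuous (ConnectedComponents.mk ∘ s) :=
    ConnectedComponents.continuous_coe.comp hs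
  refine ⟨hcp.connectedComponentsLift, fun a => hcp.connectedComponentsLift_apply_coe a, ?_⟩
  have hli : Function.LeftInverse hcs.connectedComponentsLift hcp.connectedComponentsLift := by
    intro x
    obtain ⟨a, rfl⟩ := ConnectedComponents.surjective_coe x
    rw [hcp.connectedComponentsLift_apply_coe]
    simp only [Function.comp_apply]
    rw [hcs.connectedComponentsLift_apply_coe]
    exact hsp a
  have hri : Function.RightInverse hcs.connectedComponentsLift hcp.connectedComponentsLift := by
    intro x
    obtain ⟨b, rfl⟩ := ConnectedComponents.surjective_coe x
    rw [hcs.connectedComponentsLift_apply_coe]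
    simp only [Function.comp_apply]
    rw [hcp.connectedComponentsLift_apply_coe]
    exact hps b
  exact ⟨hli.injective, hri.surjective⟩

theorem reebRel_equivalence {X : Type*} [TopologicalSpace X] (f : X → ℝ) :
    Equivalence (reebRel f) := by
  constructor
  · intro x
    exact ⟨rfl, mem_connectedComponentIn rfl⟩
  · rintro x y ⟨hfxy, hy⟩
    refine ⟨hfxy.symm, ?_⟩
    rw [← hfxy]
    have hx : x ∈ f ⁻¹' {f x} := rfl
    rw [← connectedComponentIn_eq hy]
    exact mem_connectedComponentIn hx
  · rintro x y z ⟨hfxy, hy⟩ ⟨hfyz, hz⟩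
    refine ⟨hfxy.trans hfyz, ?_⟩
    rw [connectedComponentIn_eq hy, hfxy]
    exact hz

theorem reebRel_of_proj_eq {X : Type*} [TopologicalSpace X] (f : X → ℝ) {x y : X}
    (h : reebProj f x = reebProj f y) : reebRel f x y :=
  ((reebRel_equivalence f).eqvGen_iff).mp (Quot.eq.mp h)

theorem reeb_aux {X : Type*} [TopologicalSpace X] (f : X → ℝ) (hf : Continuous f)
    (σ : ReebGraph f → X) (hσ : Continuous σ)
    (hsec : ∀ q : ReebGraph f, reebProj f (σ q) = q) (I : Set ℝ) :
    ∃ h : ConnectedComponents ↥(f ⁻¹' I) → ConnectedComponents ↥(reebMap f ⁻¹' I),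
      (∀ x : ↥(f ⁻¹' I),
        h (ConnectedComponents.mk x) = ConnectedComponents.mk ⟨reebProj f x.1, x.2⟩) ∧
      Function.Bijective h := by
  have hfs : ∀ q : ReebGraph f, f (σ q) = reebMap f q := by
    intro q
    conv_rhs => rw [← hsec q]
    rfl
  set p : ↥(f ⁻¹' I) → ↥(reebMap f ⁻¹' I) := fun x => ⟨reebProj f x.1, x.2⟩ with hp_def
  set s : ↥(reebMap f ⁻¹' I) → ↥(f ⁻¹' I) :=
    fun q => ⟨σ q.1, by show f (σ q.1) ∈ I; rw [hfs q.1]; exact q.2⟩ with hs_def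
  have hpc : Continuous p := (continuous_quot_mk.comp continuous_subtype_val).subtype_mk _
  have hsc : Continuous s := (hσ.comp continuous_subtype_val).subtype_mk _
  have hps : ∀ q, ConnectedComponents.mk (p (s q)) = ConnectedComponents.mk q := by
    intro q
    congr 1
    exact Subtype.ext (hsec q.1)
  have hsp : ∀ x, ConnectedComponents.mk (s (p x)) = ConnectedComponents.mk x := by
    intro x
    have hrel : reebRel f x.1 (σ (reebProj f x.1)) :=
      reebRel_of_proj_eq f (hsec (reebProj f x.1)).symm
    obtain ⟨hfeq, hmem⟩ := hrel
    have hsub : f ⁻¹' {f x.1} ⊆ f ⁻¹' I := fun z hz => by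
      have hz' : f z = f x.1 := hz
      show f z ∈ I
      rw [hz']
      exact x.2
    have hmem' : σ (reebProj f x.1) ∈ connectedComponentIn (f ⁻¹' I) x.1 :=
      connectedComponentIn_mono x.1 hsub hmem
    rw [connectedComponentIn_eq_image x.2] at hmem'
    obtain ⟨z, hz, hzval⟩ := hmem'
    have : s (p x) = z := Subtype.ext hzval.symm
    rw [this, ConnectedComponents.coe_eq_coe']
    rwa [show (⟨x.1, x.2⟩ : ↥(f ⁻¹' I)) = x from rfl] at hz
  exact aux_bij p hpc s hsc hps hsp

/-- If the Reeb projection `π` admits a continuous section `σ`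
(`π ∘ σ = id`), then for every `α ∈ ℝ` the map induced by `π` between the connected
components of the sublevel set `f ⁻¹' (-∞, α]` and those of `f̃ ⁻¹' (-∞, α]` is a
bijection, and likewise for the superlevel sets `f ⁻¹' [α, +∞)` and `f̃ ⁻¹' [α, +∞)`. -/
theorem reebProj_bijective_on_connectedComponents_of_section
    {X : Type*} [TopologicalSpace X] (f : X → ℝ) (hf : Continuous f)
    (σ : ReebGraph f → X) (hσ : Continuous σ)
    (hsec : ∀ q : ReebGraph f, reebProj f (σ q) = q) (α : ℝ) :
    (∃ h : ConnectedComponents ↥(f ⁻¹' Set.Iic α) →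
        ConnectedComponents ↥(reebMap f ⁻¹' Set.Iic α),
      (∀ x : ↥(f ⁻¹' Set.Iic α),
        h (ConnectedComponents.mk x) = ConnectedComponents.mk ⟨reebProj f x.1, x.2⟩) ∧
      Function.Bijective h) ∧
    (∃ h : ConnectedComponents ↥(f ⁻¹' Set.Ici α) →
        ConnectedComponents ↥(reebMap f ⁻¹' Set.Ici α),
      (∀ x : ↥(f ⁻¹' Set.Ici α),
        h (ConnectedComponents.mk x) = ConnectedComponents.mk ⟨reebProj f x.1, x.2⟩) ∧
      Function.Bijective h) := by
  exact ⟨reeb_aux f hf σ hσ hsec (Set.Iic α), reeb_aux f hf σ hσ hsec (Set.Ici α)⟩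
end

section
/- Equip ℝ² with the ℓ∞ metric. For all D, D' ⊆ ℝ² and all Θ ⊆ ℝ², the Θ-bottleneck distance is unchanged by discarding points lying in Θ: d_Θ(D, D') = d_Θ(D ∖ Θ, D' ∖ Θ). -/
open ENNReal

/-- A partial matching between two diagrams `D, D' ⊆ ℝ²`: a set of pairs
`Γ ⊆ D × D'` in which every point of `D` occurs in at most one pair and every
point of `D'` occurs in at most one pair. -/
def IsPartialMatching (D D' : Set (ℝ × ℝ)) (Γ : Set ((ℝ × ℝ) × (ℝ × ℝ))) : Prop :=
  Γ ⊆ D ×ˢ D' ∧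
  (∀ p q q', (p, q) ∈ Γ → (p, q') ∈ Γ → q = q') ∧
  (∀ p p' q, (p, q) ∈ Γ → (p', q) ∈ Γ → p = p')

/-- The `Θ`-cost of a partial matching `Γ` between `D` and `D'`: the supremum (in
`[0,∞]`) of the `ℓ∞` distances between matched pairs, together with the extended
distances from each unmatched point of `D` and of `D'` to the set `Θ`.
(The product metric on `ℝ × ℝ` is the `ℓ∞` metric.) -/
noncomputable def matchingCost (Θ D D' : Set (ℝ × ℝ))
    (Γ : Set ((ℝ × ℝ) × (ℝ × ℝ))) : ℝ≥0∞ :=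
  (⨆ pq ∈ Γ, edist pq.1 pq.2) ⊔
  (⨆ p ∈ {p ∈ D | ∀ q, (p, q) ∉ Γ}, EMetric.infEdist p Θ) ⊔
  (⨆ q ∈ {q ∈ D' | ∀ p, (p, q) ∉ Γ}, EMetric.infEdist q Θ)

/-- The `Θ`-bottleneck distance between `D, D' ⊆ ℝ²`: the infimum of the `Θ`-costs
over all partial matchings between `D` and `D'`. -/
noncomputable def bottleneckDist (Θ D D' : Set (ℝ × ℝ)) : ℝ≥0∞ :=
  ⨅ Γ ∈ {Γ | IsPartialMatching D D' Γ}, matchingCost Θ D D' Γ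

lemma IsPartialMatching.mono {D₁ D₁' D₂ D₂' : Set (ℝ × ℝ)} {Γ : Set ((ℝ × ℝ) × (ℝ × ℝ))}
    (hΓ : IsPartialMatching D₁ D₁' Γ) (hD : D₁ ⊆ D₂) (hD' : D₁' ⊆ D₂') :
    IsPartialMatching D₂ D₂' Γ :=
  ⟨hΓ.1.trans (Set.prod_mono hD hD'), hΓ.2⟩

def restrictCompl (Θ : Set (ℝ × ℝ)) (Γ : Set ((ℝ × ℝ) × (ℝ × ℝ))) :
    Set ((ℝ × ℝ) × (ℝ × ℝ)) :=
  {pq ∈ Γ | pq.1 ∉ Θ ∧ pq.2 ∉ Θ}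

lemma IsPartialMatching.restrictCompl {D D' : Set (ℝ × ℝ)} {Γ : Set ((ℝ × ℝ) × (ℝ × ℝ))}
    (hΓ : IsPartialMatching D D' Γ) (Θ : Set (ℝ × ℝ)) :
    IsPartialMatching (D \ Θ) (D' \ Θ) (restrictCompl Θ Γ) := by
  obtain ⟨hsub, hleft, hright⟩ := hΓ
  refine ⟨?_, fun p q q' hq hq' => hleft p q q' hq.1 hq'.1,
    fun p p' q hp hp' => hright p p' q hp.1 hp'.1⟩
  rintro ⟨p, q⟩ ⟨hpq, hp, hq⟩
  exact ⟨⟨(hsub hpq).1, hp⟩, ⟨(hsub hpq).2, hq⟩⟩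

lemma matchingCost_le_iff {Θ D D' : Set (ℝ × ℝ)} {Γ : Set ((ℝ × ℝ) × (ℝ × ℝ))} {r : ℝ≥0∞} :
    matchingCost Θ D D' Γ ≤ r ↔
      (∀ p q, (p, q) ∈ Γ → edist p q ≤ r) ∧
      (∀ p ∈ D, (∀ q, (p, q) ∉ Γ) → Metric.infEDist p Θ ≤ r) ∧
      (∀ q ∈ D', (∀ p, (p, q) ∉ Γ) → Metric.infEDist q Θ ≤ r) := by
  simp only [matchingCost, sup_le_iff, iSup₂_le_iff, Set.mem_ofPred_eq, and_imp, Prod.forall,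
    and_assoc]
  -- `matchingCost` is stated with the deprecated alias `EMetric.infEdist` of `Metric.infEDist`
  exact Iff.rfl

lemma matchingCost_le_matchingCost_diff (Θ D D' : Set (ℝ × ℝ)) (Γ : Set ((ℝ × ℝ) × (ℝ × ℝ))) :
    matchingCost Θ D D' Γ ≤ matchingCost Θ (D \ Θ) (D' \ Θ) Γ := by
  obtain ⟨hpairs, hleft, hright⟩ :=
    matchingCost_le_iff.1 (le_refl (matchingCost Θ (D \ Θ) (D' \ Θ) Γ))
  refine matchingCost_le_iff.2 ⟨hpairs, fun p hp hun => ?_, fun q hq hun => ?_⟩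
  · by_cases hpΘ : p ∈ Θ
    · simp [Metric.infEDist_zero_of_mem hpΘ]
    · exact hleft p ⟨hp, hpΘ⟩ hun
  · by_cases hqΘ : q ∈ Θ
    · simp [Metric.infEDist_zero_of_mem hqΘ]
    · exact hright q ⟨hq, hqΘ⟩ hun

/-- A point outside `Θ` whose partner lies in `Θ` is no farther from `Θ` than from its partner,
so dropping such pairs costs nothing. -/
lemma matchingCost_diff_restrictCompl_le (Θ D D' : Set (ℝ × ℝ))
    (Γ : Set ((ℝ × ℝ) × (ℝ × ℝ))) :
    matchingCost Θ (D \ Θ) (D' \ Θ) (restrictCompl Θ Γ) ≤ matchingCost Θ D D' Γ := by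
  obtain ⟨hpairs, hleft, hright⟩ :=
    matchingCost_le_iff.1 (le_refl (matchingCost Θ D D' Γ))
  refine matchingCost_le_iff.2 ⟨fun p q hpq => hpairs p q hpq.1, ?_, ?_⟩
  · rintro p ⟨hpD, hpΘ⟩ hun
    by_cases hm : ∃ q, (p, q) ∈ Γ
    · obtain ⟨q, hpq⟩ := hm
      have hqΘ : q ∈ Θ := by_contra fun hqΘ => hun q ⟨hpq, hpΘ, hqΘ⟩
      exact (Metric.infEDist_le_edist_of_mem hqΘ).trans (hpairs p q hpq)
    · exact hleft p hpD (not_exists.1 hm)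
  · rintro q ⟨hqD, hqΘ⟩ hun
    by_cases hm : ∃ p, (p, q) ∈ Γ
    · obtain ⟨p, hpq⟩ := hm
      have hpΘ : p ∈ Θ := by_contra fun hpΘ => hun p ⟨hpq, hpΘ, hqΘ⟩
      calc Metric.infEDist q Θ ≤ edist q p := Metric.infEDist_le_edist_of_mem hpΘ
        _ = edist p q := edist_comm q p
        _ ≤ _ := hpairs p q hpq
    · exact hright q hqD (not_exists.1 hm)

lemma bottleneckDist_le_matchingCost {Θ D D' : Set (ℝ × ℝ)} {Γ : Set ((ℝ × ℝ) × (ℝ × ℝ))}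
    (hΓ : IsPartialMatching D D' Γ) :
    bottleneckDist Θ D D' ≤ matchingCost Θ D D' Γ :=
  iInf₂_le Γ hΓ

lemma le_bottleneckDist {Θ D D' : Set (ℝ × ℝ)} {r : ℝ≥0∞}
    (h : ∀ Γ, IsPartialMatching D D' Γ → r ≤ matchingCost Θ D D' Γ) :
    r ≤ bottleneckDist Θ D D' :=
  le_iInf₂ h

/-- The `Θ`-bottleneck distance is unchanged by discarding the
points lying in `Θ`: `d_Θ(D, D') = d_Θ(D \ Θ, D' \ Θ)`. -/
theorem bottleneckDist_diff_eq
    (D D' Θ : Set (ℝ × ℝ)) :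
    bottleneckDist Θ D D' = bottleneckDist Θ (D \ Θ) (D' \ Θ) := by
  apply le_antisymm
  · refine le_bottleneckDist fun Γ hΓ => ?_
    calc bottleneckDist Θ D D'
        ≤ matchingCost Θ D D' Γ :=
          bottleneckDist_le_matchingCost (hΓ.mono Set.sdiff_subset Set.sdiff_subset)
      _ ≤ matchingCost Θ (D \ Θ) (D' \ Θ) Γ := matchingCost_le_matchingCost_diff Θ D D' Γ
  · refine le_bottleneckDist fun Γ hΓ => ?_
    calc bottleneckDist Θ (D \ Θ) (D' \ Θ)
        ≤ matchingCost Θ (D \ Θ) (D' \ Θ) (restrictCompl Θ Γ) :=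
          bottleneckDist_le_matchingCost (hΓ.restrictCompl Θ)
      _ ≤ matchingCost Θ D D' Γ := matchingCost_diff_restrictCompl_le Θ D D' Γ
end

section
/- Equip ℝ² with the ℓ∞ metric and fix Θ ⊆ ℝ². The Θ-bottleneck distance d_Θ satisfies the triangle inequality: for all D, D', D'' ⊆ ℝ², one has d_Θ(D, D'') ≤ d_Θ(D, D') + d_Θ(D', D'') (addition taken in [0, ∞]). Together with the evident symmetry d_Θ(D, D') = d_Θ(D', D), this shows d_Θ is an extended pseudometric on subsets of ℝ². -/
open ENNReal

lemma edist_le_cost {Θ D D' : Set (ℝ × ℝ)} {Γ : Set ((ℝ × ℝ) × (ℝ × ℝ))}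
    {p q : ℝ × ℝ} (h : (p, q) ∈ Γ) : edist p q ≤ matchingCost Θ D D' Γ :=
  le_trans (le_iSup₂ (f := fun pq (_ : pq ∈ Γ) => edist pq.1 pq.2) (p, q) h)
    (le_sup_of_le_left le_sup_left)

lemma left_le_cost {Θ D D' : Set (ℝ × ℝ)} {Γ : Set ((ℝ × ℝ) × (ℝ × ℝ))}
    {p : ℝ × ℝ} (hp : p ∈ D) (h : ∀ q, (p, q) ∉ Γ) :
    EMetric.infEdist p Θ ≤ matchingCost Θ D D' Γ :=
  le_trans (le_iSup₂ (f := fun x (_ : x ∈ {p ∈ D | ∀ q, (p, q) ∉ Γ}) =>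
    EMetric.infEdist x Θ) p ⟨hp, h⟩) (le_sup_of_le_left le_sup_right)

lemma right_le_cost {Θ D D' : Set (ℝ × ℝ)} {Γ : Set ((ℝ × ℝ) × (ℝ × ℝ))}
    {q : ℝ × ℝ} (hq : q ∈ D') (h : ∀ p, (p, q) ∉ Γ) :
    EMetric.infEdist q Θ ≤ matchingCost Θ D D' Γ :=
  le_trans (le_iSup₂ (f := fun x (_ : x ∈ {q ∈ D' | ∀ p, (p, q) ∉ Γ}) =>
    EMetric.infEdist x Θ) q ⟨hq, h⟩) le_sup_right

lemma cost_le {Θ D D' : Set (ℝ × ℝ)} {Γ : Set ((ℝ × ℝ) × (ℝ × ℝ))} {c : ℝ≥0∞}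
    (h1 : ∀ pq ∈ Γ, edist pq.1 pq.2 ≤ c)
    (h2 : ∀ p ∈ D, (∀ q, (p, q) ∉ Γ) → EMetric.infEdist p Θ ≤ c)
    (h3 : ∀ q ∈ D', (∀ p, (p, q) ∉ Γ) → EMetric.infEdist q Θ ≤ c) :
    matchingCost Θ D D' Γ ≤ c := by
  refine sup_le (sup_le (iSup₂_le h1) (iSup₂_le ?_)) (iSup₂_le ?_)
  · exact fun p hp => h2 p hp.1 hp.2
  · exact fun q hq => h3 q hq.1 hq.2

lemma bottleneckDist_le_add {Θ D D' D'' : Set (ℝ × ℝ)}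
    {Γ₁ Γ₂ : Set ((ℝ × ℝ) × (ℝ × ℝ))}
    (h1 : IsPartialMatching D D' Γ₁) (h2 : IsPartialMatching D' D'' Γ₂) :
    bottleneckDist Θ D D'' ≤ matchingCost Θ D D' Γ₁ + matchingCost Θ D' D'' Γ₂ := by
  set Γ : Set ((ℝ × ℝ) × (ℝ × ℝ)) :=
    {pr | ∃ q, (pr.1, q) ∈ Γ₁ ∧ (q, pr.2) ∈ Γ₂} with hΓ
  have hmatch : IsPartialMatching D D'' Γ := by
    refine ⟨?_, ?_, ?_⟩
    · rintro ⟨p, r⟩ ⟨q, hq1, hq2⟩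
      exact ⟨(h1.1 hq1).1, (h2.1 hq2).2⟩
    · rintro p r r' ⟨q, hq1, hq2⟩ ⟨q', hq1', hq2'⟩
      obtain rfl := h1.2.1 p q q' hq1 hq1'
      exact h2.2.1 q r r' hq2 hq2'
    · rintro p p' r ⟨q, hq1, hq2⟩ ⟨q', hq1', hq2'⟩
      obtain rfl := h2.2.2 q q' r hq2 hq2'
      exact h1.2.2 p p' q hq1 hq1'
  refine le_trans (iInf₂_le Γ hmatch) (cost_le ?_ ?_ ?_)
  · rintro ⟨p, r⟩ ⟨q, hq1, hq2⟩
    exact le_trans (edist_triangle p q r)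
      (add_le_add (edist_le_cost hq1) (edist_le_cost hq2))
  · intro p hp hun
    by_cases h : ∀ q, (p, q) ∉ Γ₁
    · exact le_trans (left_le_cost hp h) le_self_add
    · push_neg at h
      obtain ⟨q, hq⟩ := h
      have hqD' : q ∈ D' := (h1.1 hq).2
      have hqun : ∀ r, (q, r) ∉ Γ₂ := fun r hr => hun r ⟨q, hq, hr⟩
      exact le_trans EMetric.infEdist_le_edist_add_infEdist
        (add_le_add (edist_le_cost hq) (left_le_cost hqD' hqun))
  · intro r hr hun
    by_cases h : ∀ q, (q, r) ∉ Γ₂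
    · exact le_trans (right_le_cost hr h) le_add_self
    · push_neg at h
      obtain ⟨q, hq⟩ := h
      have hqD' : q ∈ D' := (h2.1 hq).1
      have hqun : ∀ p, (p, q) ∉ Γ₁ := fun p hp => hun p ⟨q, hp, hq⟩
      refine le_trans EMetric.infEdist_le_edist_add_infEdist
        (le_trans (add_le_add (le_refl (edist r q)) (right_le_cost (D := D) hqD' hqun)) ?_)
      rw [edist_comm, add_comm]
      exact add_le_add (le_refl _) (edist_le_cost hq)

lemma bottleneckDist_le_symm (Θ D D' : Set (ℝ × ℝ)) :
    bottleneckDist Θ D D' ≤ bottleneckDist Θ D' D := by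
  refine le_iInf₂ fun Γ hΓ => ?_
  set Γ' : Set ((ℝ × ℝ) × (ℝ × ℝ)) := {pq | (pq.2, pq.1) ∈ Γ} with hΓ'
  have hmatch : IsPartialMatching D D' Γ' := by
    refine ⟨?_, ?_, ?_⟩
    · rintro ⟨p, q⟩ h
      exact ⟨(hΓ.1 h).2, (hΓ.1 h).1⟩
    · intro p q q' h h'; exact hΓ.2.2 q q' p h h'
    · intro p p' q h h'; exact hΓ.2.1 q p p' h h'
  refine le_trans (iInf₂_le Γ' hmatch) (cost_le ?_ ?_ ?_)
  · rintro ⟨p, q⟩ h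
    rw [edist_comm]
    exact edist_le_cost h
  · intro p hp hun
    exact right_le_cost hp fun q hq => hun q hq
  · intro q hq hun
    exact left_le_cost hq fun p hp => hun p hp

lemma bottleneckDist_symm (Θ D D' : Set (ℝ × ℝ)) :
    bottleneckDist Θ D D' = bottleneckDist Θ D' D :=
  le_antisymm (bottleneckDist_le_symm Θ D D') (bottleneckDist_le_symm Θ D' D)

/-- The `Θ`-bottleneck distance satisfies the triangle inequality
(in `[0,∞]`), and it is symmetric; hence it is an extended pseudometric on subsets
of `ℝ²` (with the `ℓ∞` metric). -/
theorem bottleneckDist_triangle_and_symm (Θ : Set (ℝ × ℝ)) :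
    (∀ D D' D'' : Set (ℝ × ℝ),
      bottleneckDist Θ D D'' ≤ bottleneckDist Θ D D' + bottleneckDist Θ D' D'') ∧
    (∀ D D' : Set (ℝ × ℝ), bottleneckDist Θ D D' = bottleneckDist Θ D' D) := by
  constructor
  · intro D D' D''
    conv_rhs => rw [bottleneckDist, bottleneckDist]
    simp_rw [ENNReal.iInf_add, ENNReal.add_iInf]
    exact le_iInf₂ fun Γ₁ h₁ => le_iInf₂ fun Γ₂ h₂ => bottleneckDist_le_add h₁ h₂
  · exact bottleneckDist_symm Θ
end
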